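/- Properties of the penalized iteration operator Q^ρ: let ρ ≥ 0 and c ≥ 0. (1) If U, V ∈ ℝ^{N×d} satisfy F_i(U)_l − ρ·Σ_{j≠i} π(u^j_l − c − U^i_l) = 0 and F_i(V)_l − ρ·Σ_{j≠i} π(v^j_l − c − V^i_l) = 0 for all i ∈ I, l ∈ {1,…,N}, then U − V ≤ ‖(u − v)^+‖ componentwise, where (u−v)^+ is the componentwise positive part; in particular U ≥ V whenever u ≥ v, and ‖U − V‖ ≤ ‖u − v‖. (2) If U satisfies the equation with input u, then ‖U‖ ≤ max(‖F(0)‖/γ, ‖u‖). (3) The penalized iteration (u^{ρ,n})_{n≥0} is componentwise nondecreasing in n and converges componentwise as n → ∞ to the unique solution u^ρ of the penalized equation with penalty parameter ρ and switching cost c. -/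

import Mathlib

open Filter Topology

noncomputable section

/-- A monotone system with constant `γ`: whenever `u i l - v i l` is the (nonnegative)
maximum of all differences, `F u i l - F v i l ≥ γ (u i l - v i l)`. -/
def IsMonotoneSystem {N d : ℕ} (γ : ℝ)
    (F : (Fin d → Fin N → ℝ) → Fin d → Fin N → ℝ) : Prop :=
  ∀ u v : Fin d → Fin N → ℝ, ∀ i : Fin d, ∀ l : Fin N,
    (∀ (j : Fin d) (k : Fin N), u j k - v j k ≤ u i l - v i l) →
    0 ≤ u i l - v i l →
    γ * (u i l - v i l) ≤ F u i l - F v i l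

/-- The intervention operator `(M_i u)_l = max_{j ≠ i} (u j l - c)`. -/
def Mop {N d : ℕ} (c : ℝ) (u : Fin d → Fin N → ℝ) (i : Fin d) (l : Fin N) : ℝ :=
  ⨆ j : {j : Fin d // j ≠ i}, (u j l - c)

/-- The sup-norm `‖u‖ = max_{i,l} |u i l|`. -/
def supNorm {N d : ℕ} (u : Fin d → Fin N → ℝ) : ℝ :=
  ⨆ p : Fin d × Fin N, |u p.1 p.2|

/-- A penalty function: continuous, non-decreasing, vanishing on `(-∞,0]` and
positive on `(0,∞)`. -/
def IsPenaltyFunction (π : ℝ → ℝ) : Prop :=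
  Continuous π ∧ Monotone π ∧ (∀ y : ℝ, y ≤ 0 → π y = 0) ∧ (∀ y : ℝ, 0 < y → 0 < π y)

/-- A concave system: each `F_i` is concave (componentwise). -/
def IsConcaveSystem {N d : ℕ}
    (F : (Fin d → Fin N → ℝ) → Fin d → Fin N → ℝ) : Prop :=
  ∀ (i : Fin d) (u v : Fin d → Fin N → ℝ) (θ : ℝ), 0 ≤ θ → θ ≤ 1 → ∀ l : Fin N,
    θ * F u i l + (1 - θ) * F v i l ≤ F (fun j k => θ * u j k + (1 - θ) * v j k) i l

/-! At an index where `U - V` attains a maximum exceeding `M ≥ 0`, the monotone system gives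
`F U - F V > γ M`; for solutions of penalized equations the monotonicity of `π` bounds the same
difference by the difference of the penalty terms, which the choice of inputs makes `≤ γ M`.
This maximum principle yields comparison of solutions (1), comparison with `0` (2), and that the
iteration increases and stays below the solution `u^ρ`; its limit solves the penalized equation by
continuity, hence equals `u^ρ` by comparison (3). -/

open Finset

section PenalizedEquation

variable {N d : ℕ} {γ ρ c M : ℝ} {F : (Fin d → Fin N → ℝ) → Fin d → Fin N → ℝ} {π : ℝ → ℝ}
  {u v U V : Fin d → Fin N → ℝ}

theorem abs_le_supNorm (u : Fin d → Fin N → ℝ) (i : Fin d) (l : Fin N) :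
    |u i l| ≤ supNorm u :=
  le_ciSup (f := fun p : Fin d × Fin N => |u p.1 p.2|) (Finite.bddAbove_range _) (i, l)

theorem supNorm_nonneg (u : Fin d → Fin N → ℝ) : 0 ≤ supNorm u :=
  Real.iSup_nonneg fun _ => abs_nonneg _

theorem supNorm_le (h : ∀ i l, |u i l| ≤ M) (hM : 0 ≤ M) : supNorm u ≤ M :=
  Real.iSup_le (fun p => h p.1 p.2) hM

theorem IsPenaltyFunction.nonneg (hπ : IsPenaltyFunction π) : 0 ≤ π := fun y =>
  (hπ.2.2.1 _ (min_le_right y 0)).symm.le.trans (hπ.2.1 (min_le_left y 0))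

theorem IsMonotoneSystem.sub_le (hF : IsMonotoneSystem γ F) (hγ : 0 < γ) (hM : 0 ≤ M)
    (h : ∀ i l, (∀ j k, U j k - V j k ≤ U i l - V i l) → M < U i l - V i l →
      F U i l - F V i l ≤ γ * M)
    (i : Fin d) (l : Fin N) : U i l - V i l ≤ M := by
  have : Nonempty (Fin d × Fin N) := ⟨(i, l)⟩
  obtain ⟨p, hp⟩ := Finite.exists_max (fun p : Fin d × Fin N => U p.1 p.2 - V p.1 p.2)
  by_contra! hlt
  have hpM : M < U p.1 p.2 - V p.1 p.2 := hlt.trans_le (hp (i, l))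
  have hmax : ∀ j k, U j k - V j k ≤ U p.1 p.2 - V p.1 p.2 := fun j k => hp (j, k)
  nlinarith [hF U V p.1 p.2 hmax (hM.trans hpM.le), h p.1 p.2 hmax hpM]

/-- `U` solves the penalized equation with input `u`, i.e. `U = Q^ρ u`. -/
def IsPenalizedSolution (F : (Fin d → Fin N → ℝ) → Fin d → Fin N → ℝ) (π : ℝ → ℝ) (ρ c : ℝ)
    (u U : Fin d → Fin N → ℝ) : Prop :=
  ∀ i l, F U i l - ρ * ∑ j ∈ univ.erase i, π (u j l - c - U i l) = 0

namespace IsPenalizedSolution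

theorem apply_eq (hU : IsPenalizedSolution F π ρ c u U) (i : Fin d) (l : Fin N) :
    F U i l = ρ * ∑ j ∈ univ.erase i, π (u j l - c - U i l) :=
  sub_eq_zero.mp (hU i l)

theorem sub_le (hF : IsMonotoneSystem γ F) (hγ : 0 < γ) (hπ : Monotone π) (hρ : 0 ≤ ρ)
    (hU : IsPenalizedSolution F π ρ c u U) (hV : IsPenalizedSolution F π ρ c v V) (hM : 0 ≤ M)
    (huv : ∀ j k, u j k - v j k ≤ M) (i : Fin d) (l : Fin N) : U i l - V i l ≤ M := by
  refine hF.sub_le hγ hM (fun i l _ hlt => ?_) i l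
  have hpen : ρ * ∑ j ∈ univ.erase i, π (u j l - c - U i l) ≤
      ρ * ∑ j ∈ univ.erase i, π (v j l - c - V i l) := by
    gcongr with j
    exact hπ (by linarith [huv j l])
  rw [hU.apply_eq, hV.apply_eq]
  nlinarith

theorem mono (hF : IsMonotoneSystem γ F) (hγ : 0 < γ) (hπ : Monotone π) (hρ : 0 ≤ ρ)
    (hU : IsPenalizedSolution F π ρ c u U) (hV : IsPenalizedSolution F π ρ c v V) (huv : u ≤ v) :
    U ≤ V := fun i l =>
  sub_nonpos.mp <| hU.sub_le hF hγ hπ hρ hV le_rfl (fun j k => sub_nonpos.mpr (huv j k)) i l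

theorem supNorm_sub_le (hF : IsMonotoneSystem γ F) (hγ : 0 < γ) (hπ : Monotone π) (hρ : 0 ≤ ρ)
    (hU : IsPenalizedSolution F π ρ c u U) (hV : IsPenalizedSolution F π ρ c v V) :
    supNorm (fun i l => U i l - V i l) ≤ supNorm (fun i l => u i l - v i l) := by
  have huv := abs_le_supNorm fun i l => u i l - v i l
  refine supNorm_le (fun i l => abs_sub_le_iff.mpr ⟨?_, ?_⟩) (supNorm_nonneg _)
  · exact hU.sub_le hF hγ hπ hρ hV (supNorm_nonneg _) (fun j k => (abs_le.mp (huv j k)).2) i l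
  · exact hV.sub_le hF hγ hπ hρ hU (supNorm_nonneg _)
      (fun j k => by linarith [(abs_le.mp (huv j k)).1]) i l

theorem supNorm_le_max (hF : IsMonotoneSystem γ F) (hγ : 0 < γ) (hπ : IsPenaltyFunction π)
    (hρ : 0 ≤ ρ) (hc : 0 ≤ c) (hU : IsPenalizedSolution F π ρ c u U) :
    supNorm U ≤ max (supNorm (F 0) / γ) (supNorm u) := by
  set M := max (supNorm (F 0) / γ) (supNorm u)
  have hM : 0 ≤ M := le_max_of_le_right (supNorm_nonneg u)
  have hF0 : ∀ i l, |F 0 i l| ≤ γ * M := fun i l =>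
    (abs_le_supNorm _ i l).trans ((div_le_iff₀' hγ).mp (le_max_left _ _))
  have hupper : ∀ i l, U i l - (0 : Fin d → Fin N → ℝ) i l ≤ M := by
    refine hF.sub_le hγ hM fun i l _ hlt => ?_
    rw [Pi.zero_apply, Pi.zero_apply, sub_zero] at hlt
    have huM : ∀ j, u j l ≤ M := fun j =>
      ((le_abs_self _).trans (abs_le_supNorm u j l)).trans (le_max_right _ _)
    have hpen : ∀ j ∈ univ.erase i, π (u j l - c - U i l) = 0 := fun j _ =>
      hπ.2.2.1 _ (by linarith [huM j])
    rw [hU.apply_eq, sum_eq_zero hpen, mul_zero]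
    linarith [neg_le_abs (F 0 i l), hF0 i l]
  have hlower : ∀ i l, (0 : Fin d → Fin N → ℝ) i l - U i l ≤ M := by
    refine hF.sub_le hγ hM fun i l _ _ => ?_
    have hpen : 0 ≤ ρ * ∑ j ∈ univ.erase i, π (u j l - c - U i l) :=
      mul_nonneg hρ (sum_nonneg fun j _ => hπ.nonneg _)
    rw [hU.apply_eq]
    linarith [le_abs_self (F 0 i l), hF0 i l]
  simp only [Pi.zero_apply, sub_zero, zero_sub] at hupper hlower
  exact supNorm_le (fun i l => abs_le.mpr ⟨by linarith [hlower i l],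
    by linarith [hupper i l]⟩) hM

theorem le_of_isPenalizedSolution_self (hF : IsMonotoneSystem γ F) (hγ : 0 < γ)
    (hπ : Monotone π) (hρ : 0 ≤ ρ) (hU : IsPenalizedSolution F π ρ c U U)
    (hV : IsPenalizedSolution F π ρ c V V) : U ≤ V := by
  refine fun i₀ l₀ => sub_nonpos.mp (hF.sub_le hγ le_rfl (fun i l hmax _ => ?_) i₀ l₀)
  have hpen : ρ * ∑ j ∈ univ.erase i, π (U j l - c - U i l) ≤
      ρ * ∑ j ∈ univ.erase i, π (V j l - c - V i l) := by
    gcongr with j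
    exact hπ (by linarith [hmax j l])
  rw [hU.apply_eq, hV.apply_eq, mul_zero]
  linarith

theorem eq_of_isPenalizedSolution_self (hF : IsMonotoneSystem γ F) (hγ : 0 < γ)
    (hπ : Monotone π) (hρ : 0 ≤ ρ) (hU : IsPenalizedSolution F π ρ c U U)
    (hV : IsPenalizedSolution F π ρ c V V) : U = V :=
  le_antisymm (hU.le_of_isPenalizedSolution_self hF hγ hπ hρ hV)
    (hV.le_of_isPenalizedSolution_self hF hγ hπ hρ hU)

theorem of_tendsto (hF : Continuous F) (hπ : Continuous π) {us Us : ℕ → Fin d → Fin N → ℝ}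
    (hsol : ∀ n, IsPenalizedSolution F π ρ c (us n) (Us n))
    (hu : Tendsto us atTop (𝓝 u)) (hU : Tendsto Us atTop (𝓝 U)) :
    IsPenalizedSolution F π ρ c u U := fun i l => by
  have hres : Continuous fun p : (Fin d → Fin N → ℝ) × (Fin d → Fin N → ℝ) =>
      F p.2 i l - ρ * ∑ j ∈ univ.erase i, π (p.1 j l - c - p.2 i l) := by
    fun_prop
  exact tendsto_nhds_unique ((hres.tendsto (u, U)).comp (hu.prodMk_nhds hU))
    (tendsto_const_nhds.congr fun n => (hsol n i l).symm)

theorem ge_of_apply_eq_zero (hV : IsPenalizedSolution F π ρ c v V) (hF : IsMonotoneSystem γ F)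
    (hγ : 0 < γ) (hπ : 0 ≤ π) (hρ : 0 ≤ ρ) (hU : ∀ i l, F U i l = 0) : U ≤ V := by
  refine fun i₀ l₀ => sub_nonpos.mp (hF.sub_le hγ le_rfl (fun i l _ _ => ?_) i₀ l₀)
  have hpen : 0 ≤ ρ * ∑ j ∈ univ.erase i, π (v j l - c - V i l) :=
    mul_nonneg hρ (sum_nonneg fun j _ => hπ _)
  rw [hU, hV.apply_eq, mul_zero]
  linarith

end IsPenalizedSolution

def IsPenalizedIteration (F : (Fin d → Fin N → ℝ) → Fin d → Fin N → ℝ) (π : ℝ → ℝ) (ρ c : ℝ)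
    (Us : ℕ → Fin d → Fin N → ℝ) : Prop :=
  (∀ i l, F (Us 0) i l = 0) ∧ ∀ n, IsPenalizedSolution F π ρ c (Us n) (Us (n + 1))

namespace IsPenalizedIteration

variable {Us : ℕ → Fin d → Fin N → ℝ}

theorem monotone (hF : IsMonotoneSystem γ F) (hγ : 0 < γ) (hπ : IsPenaltyFunction π)
    (hρ : 0 ≤ ρ) (hUs : IsPenalizedIteration F π ρ c Us) : Monotone Us := by
  refine monotone_nat_of_le_succ fun n => ?_
  induction n with
  | zero => exact (hUs.2 0).ge_of_apply_eq_zero hF hγ hπ.nonneg hρ hUs.1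
  | succ n ih => exact (hUs.2 n).mono hF hγ hπ.2.1 hρ (hUs.2 (n + 1)) ih

theorem le_of_isPenalizedSolution_self (hF : IsMonotoneSystem γ F) (hγ : 0 < γ)
    (hπ : IsPenaltyFunction π) (hρ : 0 ≤ ρ) (hUs : IsPenalizedIteration F π ρ c Us)
    (hV : IsPenalizedSolution F π ρ c V V) (n : ℕ) : Us n ≤ V := by
  induction n with
  | zero => exact hV.ge_of_apply_eq_zero hF hγ hπ.nonneg hρ hUs.1
  | succ n ih => exact (hUs.2 n).mono hF hγ hπ.2.1 hρ hV ih

theorem tendsto (hF : IsMonotoneSystem γ F) (hγ : 0 < γ) (hFcont : Continuous F)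
    (hπ : IsPenaltyFunction π) (hρ : 0 ≤ ρ) (hUs : IsPenalizedIteration F π ρ c Us)
    (hV : IsPenalizedSolution F π ρ c V V) : Tendsto Us atTop (𝓝 V) := by
  have hlim := tendsto_atTop_ciSup (hUs.monotone hF hγ hπ hρ)
    ⟨V, Set.forall_mem_range.mpr (hUs.le_of_isPenalizedSolution_self hF hγ hπ hρ hV)⟩
  have hsup : IsPenalizedSolution F π ρ c (⨆ n, Us n) (⨆ n, Us n) :=
    IsPenalizedSolution.of_tendsto hFcont hπ.1 hUs.2 hlim
      ((tendsto_add_atTop_iff_nat 1).mpr hlim)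
  rwa [hsup.eq_of_isPenalizedSolution_self hF hγ hπ.2.1 hρ hV] at hlim

end IsPenalizedIteration

end PenalizedEquation

theorem penalized_iteration_properties_general {N d : ℕ}
    (γ : ℝ) (hγ : 0 < γ)
    (F : (Fin d → Fin N → ℝ) → Fin d → Fin N → ℝ)
    (hFcont : Continuous F) (hFmono : IsMonotoneSystem γ F)
    (π : ℝ → ℝ) (hπ : IsPenaltyFunction π)
    (ρ : ℝ) (hρ : 0 ≤ ρ) (c : ℝ) (hc : 0 ≤ c) :
    -- (1) one-sided bound, monotonicity, nonexpansiveness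
    (∀ u v U V : Fin d → Fin N → ℝ,
      (∀ i l, F U i l - ρ * ∑ j ∈ Finset.univ.erase i, π (u j l - c - U i l) = 0) →
      (∀ i l, F V i l - ρ * ∑ j ∈ Finset.univ.erase i, π (v j l - c - V i l) = 0) →
      (∀ i l, U i l - V i l ≤ ⨆ p : Fin d × Fin N, max (u p.1 p.2 - v p.1 p.2) 0) ∧
      ((∀ i l, v i l ≤ u i l) → ∀ i l, V i l ≤ U i l) ∧
      supNorm (fun i l => U i l - V i l) ≤ supNorm (fun i l => u i l - v i l)) ∧
    -- (2) a priori bound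
    (∀ u U : Fin d → Fin N → ℝ,
      (∀ i l, F U i l - ρ * ∑ j ∈ Finset.univ.erase i, π (u j l - c - U i l) = 0) →
      supNorm U ≤ max (supNorm (F 0) / γ) (supNorm u)) ∧
    -- (3) monotone convergence of the penalized iteration
    (∀ (Useq : ℕ → Fin d → Fin N → ℝ) (uρ : Fin d → Fin N → ℝ),
      (∀ i l, F (Useq 0) i l = 0) →
      (∀ n : ℕ, ∀ i l, F (Useq (n + 1)) i l -
        ρ * ∑ j ∈ Finset.univ.erase i, π (Useq n j l - c - Useq (n + 1) i l) = 0) →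
      (∀ i l, F uρ i l - ρ * ∑ j ∈ Finset.univ.erase i, π (uρ j l - c - uρ i l) = 0) →
      (∀ n : ℕ, ∀ i l, Useq n i l ≤ Useq (n + 1) i l) ∧
      (∀ i l, Filter.Tendsto (fun n => Useq n i l) Filter.atTop (nhds (uρ i l)))) := by
  refine ⟨fun u v U V hU hV => ⟨?_, fun hvu => ?_, ?_⟩, fun u U hU => ?_,
    fun Useq uρ h0 hstep hfix => ?_⟩
  · have hbdd := Finite.bddAbove_range fun p : Fin d × Fin N => max (u p.1 p.2 - v p.1 p.2) 0
    exact IsPenalizedSolution.sub_le hFmono hγ hπ.2.1 hρ hU hV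
      (Real.iSup_nonneg fun _ => le_max_right _ _)
      (fun j k => (le_max_left _ _).trans (le_ciSup hbdd (j, k)))
  · exact IsPenalizedSolution.mono hFmono hγ hπ.2.1 hρ hV hU hvu
  · exact IsPenalizedSolution.supNorm_sub_le hFmono hγ hπ.2.1 hρ hU hV
  · exact IsPenalizedSolution.supNorm_le_max hFmono hγ hπ hρ hc hU
  · have hUs : IsPenalizedIteration F π ρ c Useq := ⟨h0, hstep⟩
    have hlim := hUs.tendsto hFmono hγ hFcont hπ hρ hfix
    exact ⟨fun n => hUs.monotone hFmono hγ hπ hρ n.le_succ,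
      fun i l => tendsto_pi_nhds.mp (tendsto_pi_nhds.mp hlim i) l⟩

/-- Properties of the penalized iteration operator `Q^ρ`: one-sided Lipschitz bound
(hence monotonicity and nonexpansiveness), a priori bound, and monotone convergence
of the penalized iteration to the unique solution of the penalized equation. -/
theorem penalized_iteration_properties {N d : ℕ} (hN : 1 ≤ N) (hd : 2 ≤ d)
    (γ : ℝ) (hγ : 0 < γ)
    (F : (Fin d → Fin N → ℝ) → Fin d → Fin N → ℝ)
    (hFcont : Continuous F) (hFmono : IsMonotoneSystem γ F)
    (π : ℝ → ℝ) (hπ : IsPenaltyFunction π)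
    (ρ : ℝ) (hρ : 0 ≤ ρ) (c : ℝ) (hc : 0 ≤ c) :
    -- (1) one-sided bound, monotonicity, nonexpansiveness
    (∀ u v U V : Fin d → Fin N → ℝ,
      (∀ i l, F U i l - ρ * ∑ j ∈ Finset.univ.erase i, π (u j l - c - U i l) = 0) →
      (∀ i l, F V i l - ρ * ∑ j ∈ Finset.univ.erase i, π (v j l - c - V i l) = 0) →
      (∀ i l, U i l - V i l ≤ ⨆ p : Fin d × Fin N, max (u p.1 p.2 - v p.1 p.2) 0) ∧
      ((∀ i l, v i l ≤ u i l) → ∀ i l, V i l ≤ U i l) ∧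
      supNorm (fun i l => U i l - V i l) ≤ supNorm (fun i l => u i l - v i l)) ∧
    -- (2) a priori bound
    (∀ u U : Fin d → Fin N → ℝ,
      (∀ i l, F U i l - ρ * ∑ j ∈ Finset.univ.erase i, π (u j l - c - U i l) = 0) →
      supNorm U ≤ max (supNorm (F 0) / γ) (supNorm u)) ∧
    -- (3) monotone convergence of the penalized iteration
    (∀ (Useq : ℕ → Fin d → Fin N → ℝ) (uρ : Fin d → Fin N → ℝ),
      (∀ i l, F (Useq 0) i l = 0) →
      (∀ n : ℕ, ∀ i l, F (Useq (n + 1)) i l -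
        ρ * ∑ j ∈ Finset.univ.erase i, π (Useq n j l - c - Useq (n + 1) i l) = 0) →
      (∀ i l, F uρ i l - ρ * ∑ j ∈ Finset.univ.erase i, π (uρ j l - c - uρ i l) = 0) →
      (∀ n : ℕ, ∀ i l, Useq n i l ≤ Useq (n + 1) i l) ∧
      (∀ i l, Filter.Tendsto (fun n => Useq n i l) Filter.atTop (nhds (uρ i l)))) :=
  penalized_iteration_properties_general γ hγ F hFcont hFmono π hπ ρ hρ c hc
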